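/- Let (G, ℓ, s) be a bar-slider framework on a looped graph G with n vertices, and let C ⊆ (ℝ²)^n be its configuration space: the set of p = (p_1,…,p_n) with ‖p_i − p_j‖² = ℓ_ij for every edge ij and ⟨p_i, n_l⟩ = e_l for every loop l on vertex i. Suppose p ∈ C is a point at which the pinned rigidity matrix M_{2,0,3}(G(p)) — the (m+c) × 2n real matrix whose row for edge ij has the entries of p_i − p_j in the two columns of vertex i, the entries of p_j − p_i in the two columns of vertex j, and zeros elsewhere, and whose row for a loop l on vertex i has the entries of n_l in the two columns of vertex i and zeros elsewhere — has rank 2n. Then p is an isolated point of C, i.e., the framework is pinned. -/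
import Mathlib

/-!
STATEMENT 19: infinitesimally pinned bar-slider frameworks are pinned.
Let (G,ℓ,s) be a bar-slider framework and C its configuration space.  If p ∈ C is a
point at which the pinned rigidity matrix M_{2,0,3}(G(p)) has rank 2n, then p is an
isolated point of C.
-/

/-- A looped graph. -/
structure LGraph (V E L : Type) where
  ends : E → V × V
  ne : ∀ e, (ends e).1 ≠ (ends e).2
  loopAt : L → V

/-- The usual inner product on ℝ². -/
def pdot (a b : ℝ × ℝ) : ℝ := a.1 * b.1 + a.2 * b.2

/-- The squared Euclidean norm on ℝ². -/
def normSq (w : ℝ × ℝ) : ℝ := w.1 ^ 2 + w.2 ^ 2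

/-- The configuration space of the bar-slider framework `(G, len, (nrm, off))`: the set
of point sets `p` with `‖p_i − p_j‖² = len_ij` for every edge `ij` and
`⟨p_i, nrm_l⟩ = off_l` for every loop `l` on vertex `i`. -/
def Config {V E L : Type} (G : LGraph V E L) (len : E → ℝ)
    (nrm : L → ℝ × ℝ) (off : L → ℝ) : Set (V → ℝ × ℝ) :=
  {p | (∀ e, normSq (p (G.ends e).1 - p (G.ends e).2) = len e) ∧
       (∀ l, pdot (p (G.loopAt l)) (nrm l) = off l)}

/-- The pinned rigidity matrix `M_{2,0,3}(G(p))`: the row of edge `e = ij` has the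
entries of `p_i − p_j` in the two columns of vertex `i`, the entries of `p_j − p_i` in
the two columns of vertex `j`, and zeros elsewhere; the row of a loop `l` on vertex `i`
has the entries of `nrm_l` in the two columns of vertex `i` and zeros elsewhere. -/
def rigidM {V E L : Type} [DecidableEq V] (G : LGraph V E L)
    (nrm : L → ℝ × ℝ) (p : V → ℝ × ℝ) : Matrix (E ⊕ L) (V ⊕ V) ℝ := fun row col =>
  match row with
  | Sum.inl e =>
      let w := p (G.ends e).1 - p (G.ends e).2
      match col with
      | Sum.inl v =>
          if v = (G.ends e).1 then w.1 else if v = (G.ends e).2 then -w.1 else 0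
      | Sum.inr v =>
          if v = (G.ends e).1 then w.2 else if v = (G.ends e).2 then -w.2 else 0
  | Sum.inr l =>
      match col with
      | Sum.inl v => if v = G.loopAt l then (nrm l).1 else 0
      | Sum.inr v => if v = G.loopAt l then (nrm l).2 else 0

set_option linter.unusedSectionVars false

noncomputable section BSAux

open ContinuousLinearMap

variable {V E L : Type} [Fintype V] [DecidableEq V] [Fintype E] [Fintype L]

def bsX (i : V) : ((V → ℝ × ℝ)) →L[ℝ] ℝ :=
  (ContinuousLinearMap.fst ℝ ℝ ℝ).comp (ContinuousLinearMap.proj i)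

def bsY (i : V) : ((V → ℝ × ℝ)) →L[ℝ] ℝ :=
  (ContinuousLinearMap.snd ℝ ℝ ℝ).comp (ContinuousLinearMap.proj i)

@[simp] lemma bsX_apply (i : V) (q : V → ℝ × ℝ) : bsX i q = (q i).1 := rfl
@[simp] lemma bsY_apply (i : V) (q : V → ℝ × ℝ) : bsY i q = (q i).2 := rfl

variable (G : LGraph V E L) (nrm : L → ℝ × ℝ) (p : V → ℝ × ℝ)

/-- row derivatives -/
def bsRow : E ⊕ L → ((V → ℝ × ℝ) →L[ℝ] ℝ)
  | Sum.inl e =>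
      (2 * ((p (G.ends e).1).1 - (p (G.ends e).2).1)) • (bsX (G.ends e).1 - bsX (G.ends e).2)
      + (2 * ((p (G.ends e).1).2 - (p (G.ends e).2).2)) • (bsY (G.ends e).1 - bsY (G.ends e).2)
  | Sum.inr l => (nrm l).1 • bsX (G.loopAt l) + (nrm l).2 • bsY (G.loopAt l)

def bsD : (V → ℝ × ℝ) →L[ℝ] ((E ⊕ L) → ℝ) := ContinuousLinearMap.pi (bsRow G nrm p)

def bsF (q : V → ℝ × ℝ) : (E ⊕ L) → ℝ :=
  Sum.elim (fun e => normSq (q (G.ends e).1 - q (G.ends e).2))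
    (fun l => pdot (q (G.loopAt l)) (nrm l))

lemma bsF_deriv : HasStrictFDerivAt (bsF G nrm) (bsD G nrm p) p := by
  apply hasStrictFDerivAt_pi''
  intro row
  rw [bsD, ContinuousLinearMap.proj_pi]
  cases row with
  | inl e =>
    set i := (G.ends e).1
    set j := (G.ends e).2
    have hX : HasStrictFDerivAt (fun q : V → ℝ × ℝ => (bsX i - bsX j) q) (bsX i - bsX j) p :=
      (bsX i - bsX j).hasStrictFDerivAt
    have hY : HasStrictFDerivAt (fun q : V → ℝ × ℝ => (bsY i - bsY j) q) (bsY i - bsY j) p :=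
      (bsY i - bsY j).hasStrictFDerivAt
    have h2 := (hX.mul hX).add (hY.mul hY)
    have hfun : (fun q : V → ℝ × ℝ => bsF G nrm q (Sum.inl e))
        = fun q => (bsX i - bsX j) q * (bsX i - bsX j) q
          + (bsY i - bsY j) q * (bsY i - bsY j) q := by
      funext q
      simp only [bsF, Sum.elim_inl, normSq, Prod.fst_sub, Prod.snd_sub,
        ContinuousLinearMap.sub_apply, bsX_apply, bsY_apply]
      ring
    have hder : bsRow G nrm p (Sum.inl e)
        = ((bsX i - bsX j) p • (bsX i - bsX j) + (bsX i - bsX j) p • (bsX i - bsX j))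
          + ((bsY i - bsY j) p • (bsY i - bsY j) + (bsY i - bsY j) p • (bsY i - bsY j)) := by
      refine ContinuousLinearMap.ext fun v => ?_
      simp only [bsRow, ContinuousLinearMap.add_apply, ContinuousLinearMap.smul_apply,
        ContinuousLinearMap.sub_apply, bsX_apply, bsY_apply, smul_eq_mul]
      ring
    rw [hfun, hder]
    exact h2
  | inr l =>
    have hfun : (fun q : V → ℝ × ℝ => bsF G nrm q (Sum.inr l))
        = fun q => bsRow G nrm p (Sum.inr l) q := by
      funext q
      simp only [bsF, Sum.elim_inr, pdot, bsRow, ContinuousLinearMap.add_apply,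
        ContinuousLinearMap.smul_apply, bsX_apply, bsY_apply, smul_eq_mul]
      ring
    rw [hfun]
    exact (bsRow G nrm p (Sum.inr l)).hasStrictFDerivAt

lemma bs_sum_pair {i j : V} (hij : i ≠ j) (a b : ℝ) (g : V → ℝ) :
    (∑ u, (if u = i then a else if u = j then b else 0) * g u) = a * g i + b * g j := by
  have h : ∀ u : V, (if u = i then a else if u = j then b else 0) * g u
      = (if u = i then a * g u else 0) + (if u = j then b * g u else 0) := by
    intro u
    by_cases h1 : u = i
    · subst h1; have : ¬ (u = j) := fun h => hij h; simp [this]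
    · by_cases h2 : u = j
      · subst h2; simp [h1]
      · simp [h1, h2]
  simp only [h, Finset.sum_add_distrib, Finset.sum_ite_eq', Finset.mem_univ, if_true]

lemma bs_sum_single (i : V) (a : ℝ) (g : V → ℝ) :
    (∑ u, (if u = i then a else 0) * g u) = a * g i := by
  simp [ite_mul]

lemma bsD_inj (hrank : (rigidM G nrm p).rank = 2 * Fintype.card V) :
    Function.Injective (bsD G nrm p) := by
  -- mulVecLin of rigidM is injective
  have hrank' : Module.finrank ℝ (LinearMap.range (rigidM G nrm p).mulVecLin)
      = 2 * Fintype.card V := hrank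
  have hsum := LinearMap.finrank_range_add_finrank_ker (rigidM G nrm p).mulVecLin
  have hdom : Module.finrank ℝ ((V ⊕ V) → ℝ) = 2 * Fintype.card V := by
    rw [Module.finrank_fintype_fun_eq_card, Fintype.card_sum]; ring
  have hker0 : Module.finrank ℝ (LinearMap.ker (rigidM G nrm p).mulVecLin) = 0 := by
    omega
  have hker : LinearMap.ker (rigidM G nrm p).mulVecLin = ⊥ :=
    Submodule.finrank_eq_zero.mp hker0
  -- now injectivity of bsD
  have hzero : ∀ v : V → ℝ × ℝ, bsD G nrm p v = 0 → v = 0 := by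
    intro v hv
    set w : (V ⊕ V) → ℝ := Sum.elim (fun u => (v u).1) (fun u => (v u).2) with hw
    have hmv : ∀ row, (rigidM G nrm p).mulVec w row = 0 := by
      intro row
      have hvrow : ∀ r, bsD G nrm p v r = 0 := fun r => congrFun hv r
      cases row with
      | inl e =>
        have hne := G.ne e
        have hcalc : (rigidM G nrm p).mulVec w (Sum.inl e)
            = (p (G.ends e).1 - p (G.ends e).2).1 * ((v (G.ends e).1).1 - (v (G.ends e).2).1)
            + (p (G.ends e).1 - p (G.ends e).2).2 * ((v (G.ends e).1).2 - (v (G.ends e).2).2) := by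
          rw [Matrix.mulVec, dotProduct, Fintype.sum_sum_type]
          have h1 : (∑ u : V, rigidM G nrm p (Sum.inl e) (Sum.inl u) * w (Sum.inl u))
              = (p (G.ends e).1 - p (G.ends e).2).1 * (v (G.ends e).1).1
                + (-(p (G.ends e).1 - p (G.ends e).2).1) * (v (G.ends e).2).1 := by
            calc (∑ u : V, rigidM G nrm p (Sum.inl e) (Sum.inl u) * w (Sum.inl u))
                = ∑ u : V, (if u = (G.ends e).1 then (p (G.ends e).1 - p (G.ends e).2).1
                    else if u = (G.ends e).2 then -(p (G.ends e).1 - p (G.ends e).2).1 else 0)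
                    * (v u).1 := Finset.sum_congr rfl (fun u _ => rfl)
              _ = _ := bs_sum_pair hne _ _ (fun u => (v u).1)
          have h2 : (∑ u : V, rigidM G nrm p (Sum.inl e) (Sum.inr u) * w (Sum.inr u))
              = (p (G.ends e).1 - p (G.ends e).2).2 * (v (G.ends e).1).2
                + (-(p (G.ends e).1 - p (G.ends e).2).2) * (v (G.ends e).2).2 := by
            calc (∑ u : V, rigidM G nrm p (Sum.inl e) (Sum.inr u) * w (Sum.inr u))
                = ∑ u : V, (if u = (G.ends e).1 then (p (G.ends e).1 - p (G.ends e).2).2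
                    else if u = (G.ends e).2 then -(p (G.ends e).1 - p (G.ends e).2).2 else 0)
                    * (v u).2 := Finset.sum_congr rfl (fun u _ => rfl)
              _ = _ := bs_sum_pair hne _ _ (fun u => (v u).2)
          rw [h1, h2]; ring
        have hd := hvrow (Sum.inl e)
        have hDe : bsD G nrm p v (Sum.inl e)
            = 2 * ((p (G.ends e).1 - p (G.ends e).2).1 * ((v (G.ends e).1).1 - (v (G.ends e).2).1)
            + (p (G.ends e).1 - p (G.ends e).2).2 * ((v (G.ends e).1).2 - (v (G.ends e).2).2)) := by
          simp only [bsD, ContinuousLinearMap.pi_apply, bsRow, ContinuousLinearMap.add_apply,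
            ContinuousLinearMap.smul_apply, ContinuousLinearMap.sub_apply, bsX_apply, bsY_apply,
            smul_eq_mul, Prod.fst_sub, Prod.snd_sub]
          ring
        rw [hcalc]
        rw [hDe] at hd
        linarith
      | inr l =>
        have hcalc : (rigidM G nrm p).mulVec w (Sum.inr l)
            = (nrm l).1 * (v (G.loopAt l)).1 + (nrm l).2 * (v (G.loopAt l)).2 := by
          rw [Matrix.mulVec, dotProduct, Fintype.sum_sum_type]
          have h1 : (∑ u : V, rigidM G nrm p (Sum.inr l) (Sum.inl u) * w (Sum.inl u))
              = (nrm l).1 * (v (G.loopAt l)).1 := by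
            calc (∑ u : V, rigidM G nrm p (Sum.inr l) (Sum.inl u) * w (Sum.inl u))
                = ∑ u : V, (if u = G.loopAt l then (nrm l).1 else 0) * (v u).1 :=
                  Finset.sum_congr rfl (fun u _ => rfl)
              _ = _ := bs_sum_single (G.loopAt l) _ (fun u => (v u).1)
          have h2 : (∑ u : V, rigidM G nrm p (Sum.inr l) (Sum.inr u) * w (Sum.inr u))
              = (nrm l).2 * (v (G.loopAt l)).2 := by
            calc (∑ u : V, rigidM G nrm p (Sum.inr l) (Sum.inr u) * w (Sum.inr u))
                = ∑ u : V, (if u = G.loopAt l then (nrm l).2 else 0) * (v u).2 :=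
                  Finset.sum_congr rfl (fun u _ => rfl)
              _ = _ := bs_sum_single (G.loopAt l) _ (fun u => (v u).2)
          rw [h1, h2]
        have hd := hvrow (Sum.inr l)
        have hDl : bsD G nrm p v (Sum.inr l)
            = (nrm l).1 * (v (G.loopAt l)).1 + (nrm l).2 * (v (G.loopAt l)).2 := by
          simp only [bsD, ContinuousLinearMap.pi_apply, bsRow, ContinuousLinearMap.add_apply,
            ContinuousLinearMap.smul_apply, bsX_apply, bsY_apply, smul_eq_mul]
        rw [hcalc, ← hDl, hd]
    have hwker : w ∈ LinearMap.ker (rigidM G nrm p).mulVecLin := by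
      rw [LinearMap.mem_ker]
      ext row
      simp only [Matrix.mulVecLin_apply, Pi.zero_apply]
      exact hmv row
    rw [hker, Submodule.mem_bot] at hwker
    funext u
    have h1 : w (Sum.inl u) = 0 := by rw [hwker]; rfl
    have h2 : w (Sum.inr u) = 0 := by rw [hwker]; rfl
    exact Prod.ext h1 h2
  intro a b hab
  have : bsD G nrm p (a - b) = 0 := by rw [map_sub, hab, sub_self]
  have := hzero _ this
  exact sub_eq_zero.mp this

end BSAux

/-- **Infinitesimal slider-pinning implies slider-pinning.** -/
theorem infinitesimally_pinned_implies_pinned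
    {V E L : Type} [Fintype V] [DecidableEq V] [Fintype E] [Fintype L]
    (G : LGraph V E L) (len : E → ℝ) (hlen : ∀ e, 0 < len e)
    (nrm : L → ℝ × ℝ) (off : L → ℝ) (p : V → ℝ × ℝ)
    (hp : p ∈ Config G len nrm off)
    (hrank : (rigidM G nrm p).rank = 2 * Fintype.card V) :
    ∃ U : Set (V → ℝ × ℝ), IsOpen U ∧ p ∈ U ∧ U ∩ Config G len nrm off = {p} := by
  classical
  have hFd := bsF_deriv G nrm p
  have hDinj := bsD_inj G nrm p hrank
  obtain ⟨g, hg⟩ := LinearMap.exists_leftInverse_of_injective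
    ((bsD G nrm p) : (V → ℝ × ℝ) →ₗ[ℝ] ((E ⊕ L) → ℝ))
    (LinearMap.ker_eq_bot.mpr (by simpa using hDinj))
  set gC : ((E ⊕ L) → ℝ) →L[ℝ] (V → ℝ × ℝ) := LinearMap.toContinuousLinearMap g with hgC
  have hcomp : gC.comp (bsD G nrm p) = ContinuousLinearMap.id ℝ (V → ℝ × ℝ) := by
    refine ContinuousLinearMap.ext fun v => ?_
    have := LinearMap.congr_fun hg v
    simpa [gC] using this
  have hh : HasStrictFDerivAt (fun q => gC (bsF G nrm q))
      ((ContinuousLinearEquiv.refl ℝ (V → ℝ × ℝ) :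
        (V → ℝ × ℝ) ≃L[ℝ] (V → ℝ × ℝ)) : (V → ℝ × ℝ) →L[ℝ] (V → ℝ × ℝ)) p := by
    have h := gC.hasStrictFDerivAt.comp p hFd
    rw [hcomp] at h
    simpa using h
  have hev := hh.eventually_left_inverse
  obtain ⟨U, hUimp, hUopen, hpU⟩ := eventually_nhds_iff.mp hev
  refine ⟨U, hUopen, hpU, ?_⟩
  ext q
  constructor
  · rintro ⟨hqU, hqC⟩
    have hFq : bsF G nrm q = bsF G nrm p := by
      funext row
      cases row with
      | inl e => simp only [bsF, Sum.elim_inl, hqC.1 e, hp.1 e]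
      | inr l => simp only [bsF, Sum.elim_inr, hqC.2 l, hp.2 l]
    have hq := hUimp q hqU
    have hp' := hUimp p hpU
    rw [hFq, hp'] at hq
    exact hq.symm
  · rintro rfl
    exact ⟨hpU, hp⟩
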